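/- Let 0 < α < 1, p ∈ (1,∞), T > 0, and let F ∈ C¹([0,T]) with F(0) = 0. Then for every t ∈ (0,T], one has 0 ≤ I_t^{1−α}(|F|^p)(t) ≤ p ∫₀ᵗ |F(s)|^{p−2}F(s) · ∂_t^α F(s) ds; in particular ∫₀ᵗ |F(s)|^{p−2}F(s) · ∂_t^α F(s) ds ≥ 0. -/

import Mathlib

open MeasureTheory

/-- The Riemann–Liouville fractional integral `I_t^β f`. -/
noncomputable def RL (β : ℝ) (f : ℝ → ℝ) (t : ℝ) : ℝ :=
  ∫ s in (0:ℝ)..t, ((t - s) ^ (β - 1) / Real.Gamma β) * f s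

/-- The Caputo fractional derivative `∂_t^α f(t) = ∫₀ᵗ (t−s)^{−α}/Γ(1−α) · f'(s) ds`. -/
noncomputable def caputo (α : ℝ) (f : ℝ → ℝ) (t : ℝ) : ℝ :=
  ∫ s in (0:ℝ)..t, ((t - s) ^ (-α) / Real.Gamma (1 - α)) * deriv f s

/-!
For a convex `C¹` function `η` the pointwise inequality `∂^α (η ∘ F) (s) ≤ η' (F s) · ∂^α F (s)`
holds. Indeed `ψ = η' (F s) · F - η ∘ F` attains its maximum over `[0, s]` at `s` (the tangent
line at `F s` lies below `η`), and the Caputo derivative is nonnegative at such a maximum: on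
`[0, x]` with `x < s`, integrating `(s - τ)^{-α} ψ'` by parts leaves only terms of the right sign
and a boundary term `(s - x)^{-α} (ψ x - ψ s) = O((s - x)^{1-α})` that vanishes as `x → s`.

Integrating over `[0, t]` and swapping the order of integration gives
`∫₀ᵗ ∂^α G = I^{2-α} G' = I^{1-α} G` whenever `G 0 = 0`, the last step by one more integration by
parts. With `η = |·|^p` and `G = |F|^p` this is the claimed inequality.
-/

open Set Filter Topology

/-- Unlike `ContDiffOn ℝ 1 f s`, this asks for two-sided derivatives at the endpoints of `s`. -/
def HasContinuousDerivOn (f : ℝ → ℝ) (s : Set ℝ) : Prop :=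
  (∀ x ∈ s, DifferentiableAt ℝ f x) ∧ ContinuousOn (deriv f) s

namespace HasContinuousDerivOn

variable {f g : ℝ → ℝ} {s t : Set ℝ}

theorem mono (hf : HasContinuousDerivOn f s) (hts : t ⊆ s) : HasContinuousDerivOn f t :=
  ⟨fun x hx => hf.1 x (hts hx), hf.2.mono hts⟩

theorem continuousOn (hf : HasContinuousDerivOn f s) : ContinuousOn f s :=
  fun x hx => (hf.1 x hx).continuousAt.continuousWithinAt

theorem const_mul (c : ℝ) (hf : HasContinuousDerivOn f s) :
    HasContinuousDerivOn (fun x => c * f x) s := by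
  refine ⟨fun x hx => (hf.1 x hx).const_mul c, ?_⟩
  simp only [deriv_const_mul_field']
  exact continuousOn_const.mul hf.2

theorem sub (hf : HasContinuousDerivOn f s) (hg : HasContinuousDerivOn g s) :
    HasContinuousDerivOn (fun x => f x - g x) s :=
  ⟨fun x hx => (hf.1 x hx).sub (hg.1 x hx),
    (hf.2.sub hg.2).congr fun x hx => deriv_fun_sub (hf.1 x hx) (hg.1 x hx)⟩

end HasContinuousDerivOn

theorem ContDiff.comp_hasContinuousDerivOn {η f : ℝ → ℝ} {s : Set ℝ} (hη : ContDiff ℝ 1 η)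
    (hf : HasContinuousDerivOn f s) : HasContinuousDerivOn (fun x => η (f x)) s := by
  have hη_diff := hη.differentiable one_ne_zero
  refine ⟨fun x hx => (hη_diff (f x)).comp x (hf.1 x hx), ?_⟩
  exact (((hη.continuous_deriv le_rfl).comp_continuousOn hf.continuousOn).mul hf.2).congr
    fun x hx => deriv_comp x (hη_diff (f x)) (hf.1 x hx)

section Kernel

variable {α : ℝ}

theorem intervalIntegrable_const_sub_rpow {r : ℝ} (hr : -1 < r) (a b : ℝ) :
    IntervalIntegrable (fun τ => (b - τ) ^ r) volume a b := by
  simpa using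
    (intervalIntegral.intervalIntegrable_rpow' (a := b - a) (b := b - b) hr).comp_sub_left b

theorem intervalIntegrable_const_sub_rpow_mul {s : ℝ} {g : ℝ → ℝ} (hα : α < 1) (hs : 0 ≤ s)
    (hg : ContinuousOn g (Icc 0 s)) :
    IntervalIntegrable (fun τ => (s - τ) ^ (-α) * g τ) volume 0 s :=
  (intervalIntegrable_const_sub_rpow (by linarith) 0 s).mul_continuousOn (by rwa [uIcc_of_le hs])

theorem integral_sub_const_rpow_neg (hα : α < 1) (a b : ℝ) :
    ∫ s in a..b, (s - a) ^ (-α) = (b - a) ^ (1 - α) / (1 - α) := by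
  rw [intervalIntegral.integral_comp_sub_right (fun u : ℝ => u ^ (-α)) a, sub_self,
    integral_rpow (Or.inl (by linarith)), Real.zero_rpow (by linarith), neg_add_eq_sub]
  ring

end Kernel

section Volterra

variable {α t : ℝ} {g : ℝ → ℝ}

/-- `(s - τ)^{-α} g τ` cut off to `0 < τ < s ≤ t`, written as a convolution integrand so that
`Integrable.convolution_integrand` gives its integrability on the square. -/
noncomputable def volterraIntegrand (α t : ℝ) (g : ℝ → ℝ) (z : ℝ × ℝ) : ℝ :=
  (Ioc 0 t).indicator g z.2 * (Ioc 0 t).indicator (fun u => u ^ (-α)) (z.1 - z.2)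

theorem integrable_volterraIntegrand (hα : α < 1) (hg : IntegrableOn g (Ioc 0 t)) :
    Integrable (volterraIntegrand α t g) ((volume.restrict (Ioc 0 t)).prod volume) := by
  have hk : Integrable ((Ioc 0 t).indicator fun u : ℝ => u ^ (-α)) := by
    rw [integrable_indicator_iff measurableSet_Ioc]
    rcases le_total 0 t with ht | ht
    · exact (intervalIntegral.intervalIntegrable_rpow' (by linarith)).1
    · simp [Ioc_eq_empty_of_le ht]
  have h := (hg.integrable_indicator measurableSet_Ioc).convolution_integrand
    (ContinuousLinearMap.mul ℝ ℝ) hk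
  exact h.mono_measure (Measure.prod_mono Measure.restrict_le_self le_rfl)

theorem integral_volterraIntegrand_snd {s : ℝ} (hs : s ∈ Ioc 0 t) :
    ∫ τ, volterraIntegrand α t g (s, τ) = ∫ τ in 0..s, (s - τ) ^ (-α) * g τ := by
  have : (fun τ => volterraIntegrand α t g (s, τ)) =
      (Ioo 0 s).indicator fun τ => (s - τ) ^ (-α) * g τ := by
    ext τ
    simp only [volterraIntegrand, indicator, mem_Ioc, mem_Ioo]
    split_ifs <;> grind
  rw [this, integral_indicator measurableSet_Ioo, intervalIntegral.integral_of_le hs.1.le,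
    integral_Ioc_eq_integral_Ioo]

theorem setIntegral_volterraIntegrand_fst (hα : α < 1) (τ : ℝ) :
    ∫ s in Ioc 0 t, volterraIntegrand α t g (s, τ) =
      (Ioc 0 t).indicator (fun τ => (t - τ) ^ (1 - α) / (1 - α) * g τ) τ := by
  by_cases hτ : τ ∈ Ioc 0 t
  · have : (fun s => volterraIntegrand α t g (s, τ)) =ᵐ[volume.restrict (Ioc 0 t)]
        (Ioc τ t).indicator fun s => (s - τ) ^ (-α) * g τ := by
      filter_upwards [ae_restrict_mem measurableSet_Ioc] with s hs
      simp only [volterraIntegrand, indicator, mem_Ioc]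
      split_ifs <;> grind
    rw [integral_congr_ae this, integral_indicator measurableSet_Ioc,
      Measure.restrict_restrict measurableSet_Ioc, Ioc_inter_Ioc, max_eq_left hτ.1.le, min_self,
      ← intervalIntegral.integral_of_le hτ.2, intervalIntegral.integral_mul_const,
      integral_sub_const_rpow_neg hα, indicator_of_mem hτ]
  · simp [volterraIntegrand, indicator_of_notMem hτ]

theorem intervalIntegrable_integral_sub_rpow_mul (hα : α < 1) (ht : 0 ≤ t)
    (hg : IntegrableOn g (Ioc 0 t)) :
    IntervalIntegrable (fun s => ∫ τ in 0..s, (s - τ) ^ (-α) * g τ) volume 0 t := by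
  rw [intervalIntegrable_iff_integrableOn_Ioc_of_le ht]
  refine (integrable_volterraIntegrand hα hg).integral_prod_left.congr ?_
  filter_upwards [ae_restrict_mem measurableSet_Ioc] with s hs
  exact integral_volterraIntegrand_snd hs

theorem integral_integral_sub_rpow_mul (hα : α < 1) (ht : 0 ≤ t)
    (hg : IntegrableOn g (Ioc 0 t)) :
    ∫ s in 0..t, ∫ τ in 0..s, (s - τ) ^ (-α) * g τ =
      ∫ τ in 0..t, (t - τ) ^ (1 - α) / (1 - α) * g τ := by
  rw [intervalIntegral.integral_of_le ht, intervalIntegral.integral_of_le ht]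
  calc ∫ s in Ioc 0 t, ∫ τ in 0..s, (s - τ) ^ (-α) * g τ
      = ∫ s in Ioc 0 t, ∫ τ, volterraIntegrand α t g (s, τ) :=
        setIntegral_congr_fun measurableSet_Ioc fun s hs =>
          (integral_volterraIntegrand_snd hs).symm
    _ = ∫ τ, ∫ s in Ioc 0 t, volterraIntegrand α t g (s, τ) :=
        integral_integral_swap (integrable_volterraIntegrand hα hg)
    _ = ∫ τ in Ioc 0 t, (t - τ) ^ (1 - α) / (1 - α) * g τ := by
        simp_rw [setIntegral_volterraIntegrand_fst hα]
        exact integral_indicator measurableSet_Ioc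

end Volterra

section FractionalCalculus

theorem caputo_eq_div (α : ℝ) (f : ℝ → ℝ) (s : ℝ) :
    caputo α f s = (∫ τ in 0..s, (s - τ) ^ (-α) * deriv f τ) / Real.Gamma (1 - α) := by
  rw [caputo, ← intervalIntegral.integral_div]
  congr 1 with τ
  ring

theorem caputo_const_mul (c : ℝ) (α : ℝ) (f : ℝ → ℝ) (s : ℝ) :
    caputo α (fun τ => c * f τ) s = c * caputo α f s := by
  simp only [caputo, deriv_const_mul_field', ← intervalIntegral.integral_const_mul]
  congr 1 with τ
  ring

variable {α β t : ℝ} {f : ℝ → ℝ}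

theorem intervalIntegrable_caputo (hα : α < 1) (ht : 0 ≤ t)
    (hf : IntegrableOn (deriv f) (Ioc 0 t)) : IntervalIntegrable (caputo α f) volume 0 t := by
  simp_rw [funext (caputo_eq_div α f)]
  exact (intervalIntegrable_integral_sub_rpow_mul hα ht hf).div_const _

theorem caputo_sub {g : ℝ → ℝ} {s : ℝ} (hα : α < 1) (hs : 0 ≤ s)
    (hf : HasContinuousDerivOn f (Icc 0 s)) (hg : HasContinuousDerivOn g (Icc 0 s)) :
    caputo α (fun τ => f τ - g τ) s = caputo α f s - caputo α g s := by
  simp only [caputo_eq_div, ← sub_div]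
  rw [← intervalIntegral.integral_sub (intervalIntegrable_const_sub_rpow_mul hα hs hf.2)
    (intervalIntegrable_const_sub_rpow_mul hα hs hg.2)]
  congr 1
  refine intervalIntegral.integral_congr fun τ hτ => ?_
  rw [uIcc_of_le hs] at hτ
  rw [deriv_fun_sub (hf.1 τ hτ) (hg.1 τ hτ)]
  ring

theorem RL_nonneg (hβ : 0 < β) (ht : 0 ≤ t) (hf : ∀ s ∈ Icc 0 t, 0 ≤ f s) : 0 ≤ RL β f t :=
  intervalIntegral.integral_nonneg ht fun s hs =>
    mul_nonneg (div_nonneg (Real.rpow_nonneg (sub_nonneg.2 hs.2) _)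
      (Real.Gamma_pos_of_pos hβ).le) (hf s hs)

theorem integral_caputo_eq_RL_deriv (hα : α < 1) (ht : 0 ≤ t)
    (hf : IntegrableOn (deriv f) (Ioc 0 t)) :
    ∫ s in 0..t, caputo α f s = RL (2 - α) (deriv f) t := by
  have hΓ : Real.Gamma (2 - α) = (1 - α) * Real.Gamma (1 - α) := by
    rw [show 2 - α = 1 - α + 1 by ring, Real.Gamma_add_one (by linarith)]
  simp_rw [caputo_eq_div, intervalIntegral.integral_div, integral_integral_sub_rpow_mul hα ht hf,
    RL, ← intervalIntegral.integral_div, hΓ, show 2 - α - 1 = 1 - α by ring]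
  congr 1 with τ
  field_simp

theorem RL_add_one_deriv (hβ : 0 < β) (ht : 0 ≤ t) (hf : ContinuousOn f (Icc 0 t))
    (hfd : ∀ x ∈ Ioo 0 t, DifferentiableAt ℝ f x) (hf' : IntervalIntegrable (deriv f) volume 0 t)
    (hf0 : f 0 = 0) :
    RL (β + 1) (deriv f) t = RL β f t := by
  have hΓ : Real.Gamma (β + 1) = β * Real.Gamma β := Real.Gamma_add_one hβ.ne'
  have hu : ∀ x ∈ Ioo 0 t, HasDerivAt (fun τ => (t - τ) ^ β / Real.Gamma (β + 1))
      (-((t - x) ^ (β - 1) / Real.Gamma β)) x := by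
    intro x hx
    have := ((Real.hasDerivAt_rpow_const (p := β) (Or.inl (sub_pos.2 hx.2).ne')).comp x
      ((hasDerivAt_id x).const_sub t)).div_const (Real.Gamma (β + 1))
    refine this.congr_deriv ?_
    rw [hΓ]
    field_simp
  have hu_cont : ContinuousOn (fun τ => (t - τ) ^ β / Real.Gamma (β + 1)) (uIcc 0 t) :=
    ((continuous_const.sub continuous_id).rpow_const fun _ => Or.inr hβ.le).continuousOn.div_const
      _
  have hu'_int : IntervalIntegrable (fun x => -((t - x) ^ (β - 1) / Real.Gamma β)) volume 0 t :=
    ((intervalIntegrable_const_sub_rpow (by linarith) 0 t).div_const _).neg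
  have hIBP := intervalIntegral.integral_mul_deriv_eq_deriv_mul_of_hasDerivAt hu_cont
    (by rwa [uIcc_of_le ht]) (by rwa [min_eq_left ht, max_eq_right ht])
    (fun x hx => (hfd x (by rwa [min_eq_left ht, max_eq_right ht] at hx)).hasDerivAt)
    hu'_int hf'
  simp only [sub_self, Real.zero_rpow hβ.ne', zero_div, zero_mul, hf0, mul_zero, sub_zero,
    neg_mul, intervalIntegral.integral_neg, zero_sub, neg_neg] at hIBP
  simp only [RL, add_sub_cancel_right]
  exact hIBP

theorem integral_caputo_eq_RL (hα : α < 1) (ht : 0 ≤ t) (hf : HasContinuousDerivOn f (Icc 0 t))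
    (hf0 : f 0 = 0) : ∫ s in 0..t, caputo α f s = RL (1 - α) f t := by
  rw [integral_caputo_eq_RL_deriv hα ht (hf.2.integrableOn_Icc.mono_set Ioc_subset_Icc_self),
    show 2 - α = 1 - α + 1 by ring]
  exact RL_add_one_deriv (by linarith) ht hf.continuousOn
    (fun x hx => hf.1 x (Ioo_subset_Icc_self hx)) (hf.2.intervalIntegrable_of_Icc ht) hf0

end FractionalCalculus

section ExtremumPrinciple

variable {α s : ℝ} {ψ : ℝ → ℝ}

theorem sub_rpow_mul_sub_le_integral (hα : 0 ≤ α) {x c : ℝ} {ψ' : ℝ → ℝ} (hx : 0 ≤ x)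
    (hxs : x < s) (hψ : ∀ τ ∈ Icc 0 x, HasDerivAt ψ (ψ' τ) τ) (hψ' : ContinuousOn ψ' (Icc 0 x))
    (hle : ∀ τ ∈ Icc 0 x, ψ τ ≤ c) :
    (s - x) ^ (-α) * (ψ x - c) ≤ ∫ τ in 0..x, (s - τ) ^ (-α) * ψ' τ := by
  have hpos : ∀ τ ∈ Icc 0 x, 0 < s - τ := fun τ hτ => by linarith [hτ.2]
  have hker : ContinuousOn (fun τ => (s - τ) ^ (-α - 1)) (Icc 0 x) := fun τ hτ =>
    ((continuous_const.sub continuous_id).continuousAt.rpow_const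
      (Or.inl (hpos τ hτ).ne')).continuousWithinAt
  have hu : ∀ τ ∈ uIcc 0 x, HasDerivAt (fun τ => (s - τ) ^ (-α)) (α * (s - τ) ^ (-α - 1)) τ := by
    intro τ hτ
    rw [uIcc_of_le hx] at hτ
    refine ((Real.hasDerivAt_rpow_const (p := -α) (Or.inl (hpos τ hτ).ne')).comp τ
      ((hasDerivAt_id τ).const_sub s)).congr_deriv ?_
    ring
  have hIBP := intervalIntegral.integral_mul_deriv_eq_deriv_mul hu
    (fun τ hτ => (hψ τ (by rwa [uIcc_of_le hx] at hτ)).sub_const c)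
    ((continuousOn_const.mul hker).intervalIntegrable_of_Icc hx)
    (hψ'.intervalIntegrable_of_Icc hx)
  have hboundary : 0 ≤ -((s - 0) ^ (-α) * (ψ 0 - c)) :=
    neg_nonneg.2 (mul_nonpos_of_nonneg_of_nonpos (Real.rpow_nonneg (hpos 0 ⟨le_rfl, hx⟩).le _)
      (sub_nonpos.2 (hle 0 ⟨le_rfl, hx⟩)))
  have hinterior : ∫ τ in 0..x, α * (s - τ) ^ (-α - 1) * (ψ τ - c) ≤ 0 := by
    rw [intervalIntegral.integral_of_le hx]
    refine setIntegral_nonpos measurableSet_Ioc fun τ hτ => ?_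
    have hτ' : τ ∈ Icc 0 x := Ioc_subset_Icc_self hτ
    exact mul_nonpos_of_nonneg_of_nonpos
      (mul_nonneg hα (Real.rpow_nonneg (hpos τ hτ').le _)) (sub_nonpos.2 (hle τ hτ'))
  rw [hIBP]
  linarith

theorem tendsto_sub_rpow_neg_mul_sub (hα : α < 1) (hψ : DifferentiableAt ℝ ψ s) :
    Tendsto (fun x => (s - x) ^ (-α) * (ψ x - ψ s)) (𝓝[<] s) (𝓝 0) := by
  have hslope := (hasDerivAt_iff_tendsto_slope.1 hψ.hasDerivAt).mono_left (nhdsLT_le_nhdsNE s)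
  have hpow : Tendsto (fun x => (s - x) ^ (1 - α)) (𝓝[<] s) (𝓝 0) := by
    have hcont : Continuous fun x : ℝ => (s - x) ^ (1 - α) :=
      (continuous_const.sub continuous_id).rpow_const fun _ => Or.inr (by linarith)
    have := hcont.tendsto s
    simp only [sub_self, Real.zero_rpow (by linarith : 1 - α ≠ 0)] at this
    exact this.mono_left nhdsWithin_le_nhds
  have := (hpow.mul hslope).neg
  rw [zero_mul, neg_zero] at this
  refine this.congr' ?_
  filter_upwards [self_mem_nhdsWithin] with x (hx : x < s)
  have hsx : 0 < s - x := sub_pos.2 hx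
  have hxs : x - s ≠ 0 := by linarith
  rw [slope_def_field, show 1 - α = -α + 1 by ring, Real.rpow_add hsx, Real.rpow_one]
  field_simp
  ring

theorem caputo_nonneg_of_isMaxOn (hα0 : 0 ≤ α) (hα1 : α < 1) (hs : 0 < s)
    (hψ : HasContinuousDerivOn ψ (Icc 0 s)) (hmax : IsMaxOn ψ (Icc 0 s) s) :
    0 ≤ caputo α ψ s := by
  have hint := intervalIntegrable_const_sub_rpow_mul hα1 hs.le hψ.2
  have hprimitive : Tendsto (fun x => ∫ τ in 0..x, (s - τ) ^ (-α) * deriv ψ τ) (𝓝[<] s)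
      (𝓝 (∫ τ in 0..s, (s - τ) ^ (-α) * deriv ψ τ)) := by
    have := intervalIntegral.continuousOn_primitive_interval' hint left_mem_uIcc s right_mem_uIcc
    rw [uIcc_of_le hs.le] at this
    rw [← nhdsWithin_Ioo_eq_nhdsLT hs]
    exact this.mono Ioo_subset_Icc_self
  have hbound : ∀ᶠ x in 𝓝[<] s,
      (s - x) ^ (-α) * (ψ x - ψ s) ≤ ∫ τ in 0..x, (s - τ) ^ (-α) * deriv ψ τ := by
    filter_upwards [Ioo_mem_nhdsLT hs] with x hx
    have hsub : Icc 0 x ⊆ Icc 0 s := Icc_subset_Icc_right hx.2.le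
    exact sub_rpow_mul_sub_le_integral hα0 hx.1.le hx.2
      (fun τ hτ => (hψ.1 τ (hsub hτ)).hasDerivAt) (hψ.2.mono hsub) (fun τ hτ => hmax (hsub hτ))
  rw [caputo_eq_div]
  exact div_nonneg (le_of_tendsto_of_tendsto
    (tendsto_sub_rpow_neg_mul_sub hα1 (hψ.1 s (right_mem_Icc.2 hs.le))) hprimitive hbound)
    (Real.Gamma_pos_of_pos (by linarith)).le

end ExtremumPrinciple

section Convexity

theorem ConvexOn.deriv_mul_sub_le {η : ℝ → ℝ} (hη : ConvexOn ℝ univ η) {x : ℝ}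
    (hx : DifferentiableAt ℝ η x) (y : ℝ) : deriv η x * (y - x) ≤ η y - η x := by
  rcases lt_trichotomy x y with hxy | rfl | hxy
  · have := hη.deriv_le_slope (mem_univ x) (mem_univ y) hxy hx
    rwa [slope_def_field, le_div_iff₀ (sub_pos.2 hxy)] at this
  · simp
  · have := hη.slope_le_deriv (mem_univ y) (mem_univ x) hxy hx
    rw [slope_def_field, div_le_iff₀ (sub_pos.2 hxy)] at this
    linarith

theorem convexOn_abs_rpow {p : ℝ} (hp : 1 ≤ p) : ConvexOn ℝ univ fun x : ℝ => |x| ^ p := by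
  refine ⟨convex_univ, fun x _ y _ a b ha hb hab => ?_⟩
  calc |a • x + b • y| ^ p ≤ (a * |x| + b * |y|) ^ p := by
        gcongr
        simpa [abs_mul, abs_of_nonneg ha, abs_of_nonneg hb] using abs_add_le (a * x) (b * y)
    _ ≤ a • |x| ^ p + b • |y| ^ p :=
        (convexOn_rpow hp).2 (abs_nonneg x) (abs_nonneg y) ha hb hab

variable {α : ℝ} {η f : ℝ → ℝ}

theorem caputo_comp_le_of_convexOn (hα0 : 0 ≤ α) (hα1 : α < 1) {s : ℝ} (hs : 0 < s)
    (hη : ConvexOn ℝ univ η) (hη1 : ContDiff ℝ 1 η) (hf : HasContinuousDerivOn f (Icc 0 s)) :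
    caputo α (fun τ => η (f τ)) s ≤ deriv η (f s) * caputo α f s := by
  set c := deriv η (f s)
  have hηf := hη1.comp_hasContinuousDerivOn hf
  have hmax : IsMaxOn (fun τ => c * f τ - η (f τ)) (Icc 0 s) s := isMaxOn_iff.2 fun τ _ => by
    have := hη.deriv_mul_sub_le (hη1.differentiable one_ne_zero (f s)) (f τ)
    linarith
  have := caputo_nonneg_of_isMaxOn hα0 hα1 hs ((hf.const_mul c).sub hηf) hmax
  rw [caputo_sub hα1 hs.le (hf.const_mul c) hηf, caputo_const_mul] at this
  linarith

theorem RL_comp_le_integral_deriv_mul_caputo (hα0 : 0 ≤ α) (hα1 : α < 1) {t : ℝ} (ht : 0 ≤ t)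
    (hη : ConvexOn ℝ univ η) (hη1 : ContDiff ℝ 1 η) (hf : HasContinuousDerivOn f (Icc 0 t))
    (hf0 : η (f 0) = 0) :
    RL (1 - α) (fun s => η (f s)) t ≤ ∫ s in 0..t, deriv η (f s) * caputo α f s := by
  rw [← integral_caputo_eq_RL hα1 ht (hη1.comp_hasContinuousDerivOn hf) hf0]
  refine intervalIntegral.integral_mono_on_of_le_Ioo ht (intervalIntegrable_caputo hα1 ht ?_)
    ((intervalIntegrable_caputo hα1 ht ?_).continuousOn_mul ?_)
    fun s hs => caputo_comp_le_of_convexOn hα0 hα1 hs.1 hη hη1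
      (hf.mono (Icc_subset_Icc_right hs.2.le))
  · exact (hη1.comp_hasContinuousDerivOn hf).2.integrableOn_Icc.mono_set Ioc_subset_Icc_self
  · exact hf.2.integrableOn_Icc.mono_set Ioc_subset_Icc_self
  · rw [uIcc_of_le ht]
    exact (hη1.continuous_deriv le_rfl).comp_continuousOn hf.continuousOn

end Convexity

theorem caputo_integrated_ineq_general (α p T : ℝ) (hα0 : 0 < α) (hα1 : α < 1) (hp : 1 < p)
    (F : ℝ → ℝ) (hdiff : ∀ s ∈ Set.Icc (0:ℝ) T, DifferentiableAt ℝ F s)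
    (hcont : ContinuousOn (deriv F) (Set.Icc 0 T)) (hF0 : F 0 = 0) :
    ∀ t ∈ Set.Ioc (0:ℝ) T,
      0 ≤ RL (1 - α) (fun s => |F s| ^ p) t ∧
      RL (1 - α) (fun s => |F s| ^ p) t ≤
        p * ∫ s in (0:ℝ)..t, (if F s = 0 then 0 else |F s| ^ (p - 2) * F s) * caputo α F s ∧
      0 ≤ ∫ s in (0:ℝ)..t, (if F s = 0 then 0 else |F s| ^ (p - 2) * F s) * caputo α F s := by
  rintro t ⟨ht, htT⟩
  have hF : HasContinuousDerivOn F (Icc 0 t) :=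
    HasContinuousDerivOn.mono ⟨hdiff, hcont⟩ (Icc_subset_Icc_right htT)
  have hη1 : ContDiff ℝ 1 fun x : ℝ => |x| ^ p := by simpa using contDiff_norm_rpow (E := ℝ) hp
  have hη' : ∀ x : ℝ,
      deriv (fun x : ℝ => |x| ^ p) x = p * (if x = 0 then 0 else |x| ^ (p - 2) * x) := by
    intro x
    rw [(hasDerivAt_abs_rpow x hp).deriv]
    split_ifs with hx <;> simp [hx, mul_assoc]
  have hRL_nonneg : 0 ≤ RL (1 - α) (fun s => |F s| ^ p) t :=
    RL_nonneg (by linarith) ht.le fun s _ => by positivity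
  have hRL_le : RL (1 - α) (fun s => |F s| ^ p) t ≤
      p * ∫ s in (0:ℝ)..t, (if F s = 0 then 0 else |F s| ^ (p - 2) * F s) * caputo α F s := by
    rw [← intervalIntegral.integral_const_mul]
    simp_rw [← mul_assoc, ← hη']
    exact RL_comp_le_integral_deriv_mul_caputo hα0.le hα1 ht.le (convexOn_abs_rpow hp.le) hη1 hF
      (by simp [hF0, (by linarith : p ≠ 0)])
  exact ⟨hRL_nonneg, hRL_le, nonneg_of_mul_nonneg_right (hRL_nonneg.trans hRL_le) (by linarith)⟩

theorem caputo_integrated_ineq (α p T : ℝ) (hα0 : 0 < α) (hα1 : α < 1) (hp : 1 < p)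
    (hT : 0 < T) (F : ℝ → ℝ) (hdiff : ∀ s ∈ Set.Icc (0:ℝ) T, DifferentiableAt ℝ F s)
    (hcont : ContinuousOn (deriv F) (Set.Icc 0 T)) (hF0 : F 0 = 0) :
    ∀ t ∈ Set.Ioc (0:ℝ) T,
      0 ≤ RL (1 - α) (fun s => |F s| ^ p) t ∧
      RL (1 - α) (fun s => |F s| ^ p) t ≤
        p * ∫ s in (0:ℝ)..t, (if F s = 0 then 0 else |F s| ^ (p - 2) * F s) * caputo α F s ∧
      0 ≤ ∫ s in (0:ℝ)..t, (if F s = 0 then 0 else |F s| ^ (p - 2) * F s) * caputo α F s :=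
  caputo_integrated_ineq_general α p T hα0 hα1 hp F hdiff hcont hF0
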